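/- arXiv:math/0312217 — 2 statements merged into one kernel-verified Lean document; each statement's English description precedes it below -/
import Mathlib

section
/- With a(p,q,r) as above and k as above, one has k(p+1,r,q) = a(p,q,r)·(p+2)(p+q+3)(p+r+1)(p+r+2)r for all nonnegative integers p, q, r with q, r ≥ 1. -/
/-!
Both sides are MacMahon's box product `H(p+2,q,r)` times an explicit rational function of
`p, q, r`: peeling the top factorial off each hyperfactorial in the denominators of `a` and `k`
turns the surplus factorials into short linear factors, and the two rational functions then
differ exactly by `(p+2)(p+q+3)(p+r+1)(p+r+2)r`.
-/

/-- The hyperfactorial `n!` = ∏_{k=0}^{n-1} k!`, as a rational number. -/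
def hfQ (n : ℕ) : ℚ := ∏ k ∈ Finset.range n, (Nat.factorial k : ℚ)

/-- `a(p,q,r) = [(p+q+r+2)!` r!` q!` (p+2)!` / ((p+q+4)!` (p+r+4)!` (q+r)!`)] ·
(p+q+1)! (p+q+2)! (p+r+3)! (p+r)!`. -/
def aZ (p q r : ℕ) : ℚ :=
  hfQ (p + q + r + 2) * hfQ r * hfQ q * hfQ (p + 2) /
      (hfQ (p + q + 4) * hfQ (p + r + 4) * hfQ (q + r)) *
    (Nat.factorial (p + q + 1) : ℚ) * (Nat.factorial (p + q + 2) : ℚ) *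
    (Nat.factorial (p + r + 3) : ℚ) * (Nat.factorial (p + r) : ℚ)

/-- MacMahon's box formula expression. -/
def hMac (p q r : ℕ) : ℚ :=
  hfQ p * hfQ q * hfQ r * hfQ (p + q + r) /
    (hfQ (p + q) * hfQ (p + r) * hfQ (q + r))

/-- `k(p,q,r) = [(p+q+r+1)!` (p+1)!` q!` r!` / ((p+q+2)!` (p+r+2)!` (q+r)!`)] ·
(p+q)! (p+r)! · q(p+1)(p+q+1)`. -/
def kZ (p q r : ℕ) : ℚ :=
  hfQ (p + q + r + 1) * hfQ (p + 1) * hfQ q * hfQ r /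
      (hfQ (p + q + 2) * hfQ (p + r + 2) * hfQ (q + r)) *
    (Nat.factorial (p + q) : ℚ) * (Nat.factorial (p + r) : ℚ) *
    ((q * (p + 1) * (p + q + 1) : ℕ) : ℚ)

open Nat

lemma hfQ_succ (n : ℕ) : hfQ (n + 1) = hfQ n * (n ! : ℚ) :=
  Finset.prod_range_succ _ n

lemma hfQ_ne_zero (n : ℕ) : hfQ n ≠ 0 :=
  Finset.prod_ne_zero_iff.mpr fun k _ => Nat.cast_ne_zero.mpr k.factorial_ne_zero

lemma kZ_succ_swap_eq_hMac (p q r : ℕ) :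
    kZ (p + 1) r q = hMac (p + 2) q r * (r * (p + 2)) / (p + q + 2) := by
  have hqr := hfQ_ne_zero (q + r)
  have hpq := hfQ_ne_zero (p + q + 2)
  have hpr := hfQ_ne_zero (p + r + 2)
  unfold kZ hMac
  rw [show p + 1 + r + q + 1 = p + 2 + q + r by omega, show p + 1 + 1 = p + 2 by omega,
    show p + 1 + r + 2 = p + r + 2 + 1 by omega, show p + 1 + q + 2 = p + q + 2 + 1 by omega,
    show r + q = q + r by omega, show p + 1 + r = p + r + 1 by omega,
    show p + 1 + q = p + q + 1 by omega, show p + 2 + q = p + q + 2 by omega,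
    show p + 2 + r = p + r + 2 by omega, hfQ_succ (p + q + 2), hfQ_succ (p + r + 2),
    Nat.factorial_succ (p + q + 1), Nat.factorial_succ (p + r + 1)]
  field_simp
  push_cast
  ring

lemma aZ_eq_hMac (p q r : ℕ) :
    aZ p q r = hMac (p + 2) q r / ((p + q + 2) * (p + q + 3) * (p + r + 1) * (p + r + 2)) := by
  have hqr := hfQ_ne_zero (q + r)
  have hpq := hfQ_ne_zero (p + q + 2)
  have hpr := hfQ_ne_zero (p + r + 2)
  unfold aZ hMac
  rw [show p + 2 + q + r = p + q + r + 2 by omega, show p + 2 + q = p + q + 2 by omega,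
    show p + 2 + r = p + r + 2 by omega, show p + q + 4 = p + q + 2 + 1 + 1 by omega,
    show p + r + 4 = p + r + 2 + 1 + 1 by omega, hfQ_succ (p + q + 2 + 1), hfQ_succ (p + q + 2),
    hfQ_succ (p + r + 2 + 1), hfQ_succ (p + r + 2), Nat.factorial_succ (p + q + 2),
    Nat.factorial_succ (p + q + 1), Nat.factorial_succ (p + r + 2),
    Nat.factorial_succ (p + r + 1), Nat.factorial_succ (p + r)]
  field_simp
  push_cast
  ring

theorem kZ_swap_eq_aZ_general (p q r : ℕ) :
    kZ (p + 1) r q =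
      aZ p q r * (((p + 2) * (p + q + 3) * (p + r + 1) * (p + r + 2) * r : ℕ) : ℚ) := by
  rw [kZ_succ_swap_eq_hMac, aZ_eq_hMac]
  field_simp
  push_cast
  ring

/-- `k(p+1,r,q) = a(p,q,r)·(p+2)(p+q+3)(p+r+1)(p+r+2)r` for nonnegative `p`
and positive `q, r`. -/
theorem kZ_swap_eq_aZ (p q r : ℕ) (hq : 1 ≤ q) (hr : 1 ≤ r) :
    kZ (p + 1) r q =
      aZ p q r * (((p + 2) * (p + q + 3) * (p + r + 1) * (p + r + 2) * r : ℕ) : ℚ) :=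
  kZ_swap_eq_aZ_general p q r
end

section
/- For any partition λ with at most N rows, the set of semistandard Young tableaux of shape λ with entries at most N is in bijection with families (P_1, …, P_{λ_1}) of pairwise vertex-disjoint lattice paths, where P_j uses unit steps east and south and runs from (j − λ'_j, N − λ'_j + j) to (j, j), λ' being the conjugate partition. -/
/-- The conjugate partition value `λ'_{c+1}` (0-indexed `c`): the number of rows
`i < N` with `lam i > c`. -/
def conjP (lam : ℕ → ℕ) (N c : ℕ) : ℕ :=
  ((Finset.range N).filter (fun i => c < lam i)).card

namespace SSYTPaths

open Finset

lemma conjP_le (lam : ℕ → ℕ) (N c : ℕ) : conjP lam N c ≤ N := by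
  calc conjP lam N c ≤ (Finset.range N).card := Finset.card_filter_le _ _
  _ = N := Finset.card_range N

lemma conjP_anti (lam : ℕ → ℕ) (N : ℕ) : Antitone (conjP lam N) := by
  intro c c' h
  apply Finset.card_le_card
  intro i hi
  simp only [Finset.mem_filter, Finset.mem_range] at *
  exact ⟨hi.1, lt_of_le_of_lt h hi.2⟩

lemma lt_lam_iff {lam : ℕ → ℕ} (hA : Antitone lam) {N : ℕ} (hN : lam N = 0)
    (i c : ℕ) : c < lam i ↔ i < conjP lam N c := by
  constructor
  · intro h
    have hiN : i < N := by
      by_contra hc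
      have := hA (le_of_not_gt hc)
      omega
    have hsub : Finset.range (i + 1) ⊆ (Finset.range N).filter (fun i' => c < lam i') := by
      intro i' hi'
      simp only [Finset.mem_range] at hi'
      simp only [Finset.mem_filter, Finset.mem_range]
      exact ⟨by omega, lt_of_lt_of_le h (hA (by omega))⟩
    have := Finset.card_le_card hsub
    simp only [Finset.card_range] at this
    unfold conjP; omega
  · intro h
    by_contra hc
    push_neg at hc
    have hsub : (Finset.range N).filter (fun i' => c < lam i') ⊆ Finset.range i := by
      intro i' hi'
      simp only [Finset.mem_filter, Finset.mem_range] at *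
      by_contra hcc
      have := hA (le_of_not_gt (by omega : ¬ i' < i))
      omega
    have := Finset.card_le_card hsub
    simp only [Finset.card_range] at this
    unfold conjP at h; omega


/-- Number of entries of column `j` (rows `i < conjP lam N j`) that are `≤ N - k`. -/
def colD (lam : ℕ → ℕ) (N : ℕ) (T : ℕ → ℕ → ℕ) (j k : ℕ) : ℕ :=
  ((Finset.range (conjP lam N j)).filter (fun i => T i j ≤ N - k)).card

/-- x-coordinate of the `j`-th path after `k` steps. -/
def pathOf (lam : ℕ → ℕ) (N : ℕ) (T : ℕ → ℕ → ℕ) (j k : ℕ) : ℤ × ℤ :=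
  ((j : ℤ) + 1 - colD lam N T j k, (j : ℤ) + 1 - colD lam N T j k + N - k)

section Forward

variable {lam : ℕ → ℕ} {N : ℕ} {T : ℕ → ℕ → ℕ}
variable (hA : Antitone lam) (hN : lam N = 0)
variable (h1 : ∀ i j, j < lam i → 1 ≤ T i j ∧ T i j ≤ N)
variable (h2 : ∀ i j, j + 1 < lam i → T i j ≤ T i (j + 1))
variable (h3 : ∀ i j, j < lam (i + 1) → T i j < T (i + 1) j)

include hA h3 in
lemma col_strict : ∀ i i' j, i < i' → j < lam i' → T i j < T i' j := by
  have key : ∀ d i j, j < lam (i + d + 1) → T i j < T (i + d + 1) j := by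
    intro d
    induction d with
    | zero => intro i j h; exact h3 i j h
    | succ d ih =>
        intro i j h
        have h' : j < lam (i + d + 1) := lt_of_lt_of_le h (hA (by omega))
        have := ih i j h'
        have heq : i + d + 1 + 1 = i + (d + 1) + 1 := by omega
        have h2' := h3 (i + d + 1) j (by rw [heq]; exact h)
        rw [heq] at h2'
        omega
  intro i i' j hii hlam
  obtain ⟨d, rfl⟩ : ∃ d, i' = i + d + 1 := ⟨i' - i - 1, by omega⟩
  exact key d i j hlam

include hA hN h1 in
lemma colD_zero (j : ℕ) : colD lam N T j 0 = conjP lam N j := by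
  unfold colD
  rw [Finset.filter_true_of_mem, Finset.card_range]
  intro i hi
  simp only [Finset.mem_range] at hi
  have : j < lam i := (lt_lam_iff hA hN i j).2 hi
  simpa using (h1 i j this).2

include hA hN h1 in
lemma colD_last (j : ℕ) : colD lam N T j N = 0 := by
  unfold colD
  rw [Finset.card_eq_zero, Finset.filter_eq_empty_iff]
  intro i hi
  simp only [Finset.mem_range] at hi
  have : j < lam i := (lt_lam_iff hA hN i j).2 hi
  have := (h1 i j this).1
  omega

lemma colD_anti_k (j k : ℕ) : colD lam N T j (k + 1) ≤ colD lam N T j k := by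
  apply Finset.card_le_card
  intro i hi
  simp only [Finset.mem_filter, Finset.mem_range] at *
  exact ⟨hi.1, by omega⟩

include hA hN h3 in
lemma colD_step (j k : ℕ) (hk : k < N) :
    colD lam N T j k ≤ colD lam N T j (k + 1) + 1 := by
  classical
  have hsub : (Finset.range (conjP lam N j)).filter (fun i => T i j ≤ N - k) ⊆
      (Finset.range (conjP lam N j)).filter (fun i => T i j ≤ N - (k + 1)) ∪
      (Finset.range (conjP lam N j)).filter (fun i => T i j = N - k) := by
    intro i hi
    simp only [Finset.mem_filter, Finset.mem_range, Finset.mem_union] at *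
    omega
  have hone : ((Finset.range (conjP lam N j)).filter (fun i => T i j = N - k)).card ≤ 1 := by
    apply Finset.card_le_one.2
    intro a ha b hb
    simp only [Finset.mem_filter, Finset.mem_range] at ha hb
    by_contra hne
    rcases Nat.lt_or_ge a b with h | h
    · have := col_strict hA h3 a b j h ((lt_lam_iff hA hN b j).2 hb.1)
      omega
    · have hba : b < a := by omega
      have := col_strict hA h3 b a j hba ((lt_lam_iff hA hN a j).2 ha.1)
      omega
  have hc1 := Finset.card_le_card hsub
  have hc2 := Finset.card_union_le
    ((Finset.range (conjP lam N j)).filter (fun i => T i j ≤ N - (k + 1)))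
    ((Finset.range (conjP lam N j)).filter (fun i => T i j = N - k))
  unfold colD at *
  omega

include hA hN h2 in
lemma colD_anti_j (j j' k : ℕ) (hj : j ≤ j') : colD lam N T j' k ≤ colD lam N T j k := by
  induction j' with
  | zero => have : j = 0 := by omega
            subst this; exact le_refl _
  | succ j'' ih =>
      rcases Nat.lt_or_ge j (j'' + 1) with h | h
      · have step : colD lam N T (j'' + 1) k ≤ colD lam N T j'' k := by
          apply Finset.card_le_card
          intro i hi
          simp only [Finset.mem_filter, Finset.mem_range] at *
          have hconj := conjP_anti lam N (by omega : j'' ≤ j'' + 1)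
          have hi1 : i < conjP lam N j'' := by omega
          have hlam : j'' + 1 < lam i := (lt_lam_iff hA hN i (j'' + 1)).2 hi.1
          have := h2 i j'' hlam
          exact ⟨hi1, by omega⟩
        exact le_trans step (ih (by omega))
      · have : j = j'' + 1 := by omega
        subst this; exact le_refl _

lemma colD_le_conjP (j k : ℕ) : colD lam N T j k ≤ conjP lam N j := by
  calc colD lam N T j k ≤ (Finset.range (conjP lam N j)).card := Finset.card_filter_le _ _
  _ = _ := Finset.card_range _

include hA hN h3 in
lemma colD_le_iff (i j t : ℕ) (ht : t ≤ N) (hij : j < lam i) :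
    colD lam N T j (N - t) ≤ i ↔ t < T i j := by
  have him : i < conjP lam N j := (lt_lam_iff hA hN i j).1 hij
  have hnn : N - (N - t) = t := by omega
  constructor
  · intro h
    by_contra hc
    push_neg at hc
    have hsub : Finset.range (i + 1) ⊆
        (Finset.range (conjP lam N j)).filter (fun i' => T i' j ≤ N - (N - t)) := by
      intro i' hi'
      simp only [Finset.mem_range] at hi'
      simp only [Finset.mem_filter, Finset.mem_range]
      refine ⟨by omega, ?_⟩
      rw [hnn]
      rcases Nat.lt_or_ge i' i with h' | h'
      · have := col_strict hA h3 i' i j h' hij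
        omega
      · have : i' = i := by omega
        subst this; omega
    have := Finset.card_le_card hsub
    simp only [Finset.card_range] at this
    unfold colD at h
    omega
  · intro h
    have hsub : (Finset.range (conjP lam N j)).filter (fun i' => T i' j ≤ N - (N - t)) ⊆
        Finset.range i := by
      intro i' hi'
      simp only [Finset.mem_filter, Finset.mem_range] at *
      rw [hnn] at hi'
      by_contra hc
      rcases Nat.lt_or_ge i i' with h' | h'
      · have := col_strict hA h3 i i' j h' ((lt_lam_iff hA hN i' j).2 hi'.1)
        omega
      · have : i = i' := by omega
        subst this; omega
    have := Finset.card_le_card hsub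
    simp only [Finset.card_range] at this
    unfold colD
    omega

end Forward


/-- The tableau recovered from the x-coordinates of a path family. -/
def tabOf (lam : ℕ → ℕ) (N : ℕ) (x : ℕ → ℕ → ℤ) (i j : ℕ) : ℕ :=
  if j < lam i then
    ((Finset.range (N + 1)).filter (fun t => (j : ℤ) - i < x j (N - t))).card
  else 0

section Backward

variable {lam : ℕ → ℕ} {N : ℕ} {x : ℕ → ℕ → ℤ}
variable (hA : Antitone lam) (hN : lam N = 0)
variable (hx0 : ∀ j, j < lam 0 → x j 0 = (j : ℤ) + 1 - conjP lam N j)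
variable (hxN : ∀ j, j < lam 0 → x j N = (j : ℤ) + 1)
variable (hstep : ∀ j, j < lam 0 → ∀ k, k < N →
    x j (k + 1) = x j k + 1 ∨ x j (k + 1) = x j k)
variable (hne : ∀ j j', j < j' → j' < lam 0 → ∀ k, k ≤ N → x j k ≠ x j' k)

include hstep in
lemma x_mono (j : ℕ) (hj : j < lam 0) :
    ∀ k k', k ≤ k' → k' ≤ N → x j k ≤ x j k' := by
  intro k k' hkk hk'
  induction k' with
  | zero => have : k = 0 := by omega
            subst this; exact le_refl _
  | succ k'' ih =>
      rcases Nat.lt_or_ge k (k'' + 1) with h | h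
      · have hs := hstep j hj k'' (by omega)
        have := ih (by omega) (by omega)
        rcases hs with hs | hs <;> omega
      · have : k = k'' + 1 := by omega
        subst this; exact le_refl _

include hx0 hxN hstep in
lemma x_bounds (j : ℕ) (hj : j < lam 0) (k : ℕ) (hk : k ≤ N) :
    (j : ℤ) + 1 - conjP lam N j ≤ x j k ∧ x j k ≤ (j : ℤ) + 1 := by
  constructor
  · have := x_mono hstep j hj 0 k (by omega) hk
    rw [hx0 j hj] at this; exact this
  · have := x_mono hstep j hj k N hk (le_refl _)
    rw [hxN j hj] at this; exact this

include hx0 hstep hne in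
lemma x_strict_j (j : ℕ) (hj : j + 1 < lam 0) (k : ℕ) (hk : k ≤ N) :
    x j k < x (j + 1) k := by
  induction k with
  | zero =>
      rw [hx0 j (by omega), hx0 (j + 1) hj]
      have := conjP_anti lam N (by omega : j ≤ j + 1)
      push_cast
      omega
  | succ k' ih =>
      have ih' := ih (by omega)
      have hs1 := hstep j (by omega) k' (by omega)
      have hs2 := hstep (j + 1) hj k' (by omega)
      have hne' := hne j (j + 1) (by omega) hj (k' + 1) hk
      rcases hs1 with hs1 | hs1 <;> rcases hs2 with hs2 | hs2 <;> omega

include hA hstep in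
lemma tabOf_le_iff (i j : ℕ) (hij : j < lam i) (t : ℕ) (ht : t ≤ N) :
    tabOf lam N x i j ≤ t ↔ x j (N - t) ≤ (j : ℤ) - i := by
  have hj0 : j < lam 0 := lt_of_lt_of_le hij (hA (Nat.zero_le i))
  set F := (Finset.range (N + 1)).filter (fun t => (j : ℤ) - i < x j (N - t)) with hF
  have hdown : ∀ t' ∈ F, ∀ t'', t'' ≤ t' → t'' ∈ F := by
    intro t' ht' t'' htt
    simp only [hF, Finset.mem_filter, Finset.mem_range] at *
    refine ⟨by omega, ?_⟩
    have : x j (N - t') ≤ x j (N - t'') :=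
      x_mono hstep j hj0 (N - t') (N - t'') (by omega) (by omega)
    omega
  have hmem : ∀ t', t' ≤ N → (t' ∈ F ↔ t' < F.card) := by
    intro t' ht'
    constructor
    · intro h
      have hsub : Finset.range (t' + 1) ⊆ F := by
        intro a ha
        simp only [Finset.mem_range] at ha
        exact hdown t' h a (by omega)
      have := Finset.card_le_card hsub
      simp only [Finset.card_range] at this
      omega
    · intro h
      by_contra hc
      have hsub : F ⊆ Finset.range t' := by
        intro a ha
        simp only [Finset.mem_range]
        by_contra hcc
        exact hc (hdown a ha t' (by omega))
      have := Finset.card_le_card hsub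
      simp only [Finset.card_range] at this
      omega
    
  have : tabOf lam N x i j = F.card := by
    unfold tabOf
    rw [if_pos hij]
  rw [this]
  have := hmem t ht
  constructor
  · intro h
    have : t ∉ F := by
      intro hmemt
      have := (hmem t ht).1 hmemt
      omega
    simp only [hF, Finset.mem_filter, Finset.mem_range] at this
    push_neg at this
    exact this (by omega)
  · intro h
    by_contra hc
    push_neg at hc
    have : t ∈ F := (hmem t ht).2 hc
    simp only [hF, Finset.mem_filter, Finset.mem_range] at this
    omega

end Backward


section Backward2

variable {lam : ℕ → ℕ} {N : ℕ} {x : ℕ → ℕ → ℤ}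
variable (hA : Antitone lam) (hN : lam N = 0)
variable (hx0 : ∀ j, j < lam 0 → x j 0 = (j : ℤ) + 1 - conjP lam N j)
variable (hxN : ∀ j, j < lam 0 → x j N = (j : ℤ) + 1)
variable (hstep : ∀ j, j < lam 0 → ∀ k, k < N →
    x j (k + 1) = x j k + 1 ∨ x j (k + 1) = x j k)
variable (hne : ∀ j j', j < j' → j' < lam 0 → ∀ k, k ≤ N → x j k ≠ x j' k)

include hA hN hx0 hxN hstep in
lemma tab_bounds (i j : ℕ) (hij : j < lam i) :
    1 ≤ tabOf lam N x i j ∧ tabOf lam N x i j ≤ N := by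
  have hj0 : j < lam 0 := lt_of_lt_of_le hij (hA (Nat.zero_le i))
  constructor
  · by_contra hc
    push_neg at hc
    have h0 : tabOf lam N x i j ≤ 0 := by omega
    have := (tabOf_le_iff hA hstep i j hij 0 (by omega)).1 h0
    rw [Nat.sub_zero, hxN j hj0] at this
    have : (0 : ℤ) ≤ (j : ℤ) - i - ((j : ℤ) + 1) := by omega
    omega
  · rw [tabOf_le_iff hA hstep i j hij N (le_refl _)]
    rw [Nat.sub_self, hx0 j hj0]
    have him : i < conjP lam N j := (lt_lam_iff hA hN i j).1 hij
    have : (i : ℤ) < (conjP lam N j : ℤ) := by exact_mod_cast him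
    omega

include hA hN hx0 hxN hstep hne in
lemma tab_row (i j : ℕ) (hij : j + 1 < lam i) :
    tabOf lam N x i j ≤ tabOf lam N x i (j + 1) := by
  have hij' : j < lam i := by omega
  have hj1 : j + 1 < lam 0 := lt_of_lt_of_le hij (hA (Nat.zero_le i))
  set t := tabOf lam N x i (j + 1) with hteq
  have htN : t ≤ N := (tab_bounds hA hN hx0 hxN hstep i (j + 1) hij).2
  have h1 : x (j + 1) (N - t) ≤ ((j : ℤ) + 1) - i := by
    have := (tabOf_le_iff hA hstep i (j + 1) hij t htN).1 (le_refl _)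
    push_cast at this ⊢
    omega
  have h2 : x j (N - t) < x (j + 1) (N - t) :=
    x_strict_j hx0 hstep hne j hj1 (N - t) (by omega)
  rw [tabOf_le_iff hA hstep i j hij' t htN]
  omega

include hA hN hx0 hxN hstep in
lemma tab_col (i j : ℕ) (hij : j < lam (i + 1)) :
    tabOf lam N x i j < tabOf lam N x (i + 1) j := by
  have hij' : j < lam i := lt_of_lt_of_le hij (hA (by omega))
  have hj0 : j < lam 0 := lt_of_lt_of_le hij (hA (Nat.zero_le _))
  set t := tabOf lam N x i j with hteq
  have ht1 : 1 ≤ t := (tab_bounds hA hN hx0 hxN hstep i j hij').1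
  have htN : t ≤ N := (tab_bounds hA hN hx0 hxN hstep i j hij').2
  have hle : x j (N - t) ≤ (j : ℤ) - i :=
    (tabOf_le_iff hA hstep i j hij' t htN).1 (le_refl _)
  have hgt : (j : ℤ) - i < x j (N - (t - 1)) := by
    by_contra hc
    push_neg at hc
    have := (tabOf_le_iff hA hstep i j hij' (t - 1) (by omega)).2 hc
    omega
  have hNt : N - (t - 1) = (N - t) + 1 := by omega
  rw [hNt] at hgt
  have hs := hstep j hj0 (N - t) (by omega)
  by_contra hc
  push_neg at hc
  have hle2 : tabOf lam N x (i + 1) j ≤ t := hc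
  have := (tabOf_le_iff hA hstep (i + 1) j hij t htN).1 hle2
  push_cast at this
  omega

include hA hN hx0 hxN hstep in
lemma rt2 (j k : ℕ) (hj : j < lam 0) (hk : k ≤ N) :
    ((j : ℤ) + 1 - colD lam N (tabOf lam N x) j k : ℤ) = x j k := by
  have hb := x_bounds hx0 hxN hstep j hj k hk
  set c : ℕ := ((j : ℤ) + 1 - x j k).toNat with hc
  have hcz : (c : ℤ) = (j : ℤ) + 1 - x j k := by
    rw [hc, Int.toNat_of_nonneg (by omega)]
  have hcm : c ≤ conjP lam N j := by
    have : (c : ℤ) ≤ (conjP lam N j : ℤ) := by omega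
    exact_mod_cast this
  have hfilter : (Finset.range (conjP lam N j)).filter
      (fun i => tabOf lam N x i j ≤ N - k) = Finset.range c := by
    ext i
    simp only [Finset.mem_filter, Finset.mem_range]
    constructor
    · intro ⟨him, hle⟩
      have hij : j < lam i := (lt_lam_iff hA hN i j).2 him
      have := (tabOf_le_iff hA hstep i j hij (N - k) (by omega)).1 hle
      rw [show N - (N - k) = k by omega] at this
      have : (i : ℤ) < c := by omega
      exact_mod_cast this
    · intro hic
      have him : i < conjP lam N j := by omega
      have hij : j < lam i := (lt_lam_iff hA hN i j).2 him
      refine ⟨him, ?_⟩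
      rw [tabOf_le_iff hA hstep i j hij (N - k) (by omega),
        show N - (N - k) = k by omega]
      have : (i : ℤ) < (c : ℤ) := by exact_mod_cast hic
      omega
  unfold colD
  rw [hfilter, Finset.card_range]
  omega

end Backward2

section RT1

variable {lam : ℕ → ℕ} {N : ℕ} {T : ℕ → ℕ → ℕ}
variable (hA : Antitone lam) (hN : lam N = 0)
variable (h1 : ∀ i j, j < lam i → 1 ≤ T i j ∧ T i j ≤ N)
variable (h3 : ∀ i j, j < lam (i + 1) → T i j < T (i + 1) j)

include hA hN h1 h3 in
lemma rt1 (i j : ℕ) (hij : j < lam i) :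
    tabOf lam N (fun j k => (j : ℤ) + 1 - colD lam N T j k) i j = T i j := by
  unfold tabOf
  rw [if_pos hij]
  have hTN : T i j ≤ N := (h1 i j hij).2
  have hfilter : (Finset.range (N + 1)).filter
      (fun t => (j : ℤ) - i < (j : ℤ) + 1 - colD lam N T j (N - t)) =
      Finset.range (T i j) := by
    ext t
    simp only [Finset.mem_filter, Finset.mem_range]
    constructor
    · intro ⟨htN, hlt⟩
      have hD : colD lam N T j (N - t) ≤ i := by omega
      exact (colD_le_iff hA hN h3 i j t (by omega) hij).1 hD
    · intro ht
      refine ⟨by omega, ?_⟩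
      have hD := (colD_le_iff hA hN h3 i j t (by omega) hij).2 ht
      have : (colD lam N T j (N - t) : ℤ) ≤ (i : ℤ) := by exact_mod_cast hD
      omega
  rw [hfilter, Finset.card_range]

lemma tabOf_congr {x x' : ℕ → ℕ → ℤ} (i j : ℕ)
    (hx : ∀ k, k ≤ N → x j k = x' j k) :
    tabOf lam N x i j = tabOf lam N x' i j := by
  unfold tabOf
  by_cases hij : j < lam i
  · rw [if_pos hij, if_pos hij]
    congr 1
    apply Finset.filter_congr
    intro t ht
    simp only [Finset.mem_range] at ht
    rw [hx (N - t) (by omega)]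
  · rw [if_neg hij, if_neg hij]

end RT1


def xfun (lam : ℕ → ℕ) (N : ℕ) (P : Fin (lam 0) → Fin (N + 1) → ℤ × ℤ)
    (j k : ℕ) : ℤ :=
  if h : j < lam 0 ∧ k ≤ N then (P ⟨j, h.1⟩ ⟨k, by omega⟩).1 else 0

section PathProps

variable {lam : ℕ → ℕ} {N : ℕ} {P : Fin (lam 0) → Fin (N + 1) → ℤ × ℤ}
variable (hP1 : ∀ j : Fin (lam 0),
    P j 0 = (((j : ℕ) : ℤ) + 1 - conjP lam N j,
             (N : ℤ) - conjP lam N j + (j : ℕ) + 1) ∧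
    P j (Fin.last N) = (((j : ℕ) : ℤ) + 1, ((j : ℕ) : ℤ) + 1) ∧
    ∀ k : ℕ, (hk : k < N) →
      P j ⟨k + 1, by omega⟩ = ((P j ⟨k, by omega⟩).1 + 1, (P j ⟨k, by omega⟩).2) ∨
      P j ⟨k + 1, by omega⟩ = ((P j ⟨k, by omega⟩).1, (P j ⟨k, by omega⟩).2 - 1))
variable (hP2 : ∀ j j' : Fin (lam 0), j ≠ j' →
    ∀ k k' : Fin (N + 1), P j k ≠ P j' k')

include hP1 in
lemma xfun_0 : ∀ j, j < lam 0 → xfun lam N P j 0 = (j : ℤ) + 1 - conjP lam N j := by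
  intro j hj
  unfold xfun
  rw [dif_pos ⟨hj, Nat.zero_le N⟩]
  have h0 : (⟨0, by omega⟩ : Fin (N + 1)) = 0 := rfl
  rw [h0, (hP1 ⟨j, hj⟩).1]

include hP1 in
lemma xfun_N : ∀ j, j < lam 0 → xfun lam N P j N = (j : ℤ) + 1 := by
  intro j hj
  unfold xfun
  rw [dif_pos ⟨hj, le_refl N⟩]
  have h0 : (⟨N, by omega⟩ : Fin (N + 1)) = Fin.last N := rfl
  rw [h0, (hP1 ⟨j, hj⟩).2.1]

include hP1 in
lemma xfun_step : ∀ j, j < lam 0 → ∀ k, k < N →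
    xfun lam N P j (k + 1) = xfun lam N P j k + 1 ∨
    xfun lam N P j (k + 1) = xfun lam N P j k := by
  intro j hj k hk
  unfold xfun
  rw [dif_pos ⟨hj, by omega⟩, dif_pos ⟨hj, by omega⟩]
  rcases (hP1 ⟨j, hj⟩).2.2 k hk with h | h
  · left; rw [h]
  · right; rw [h]

include hP1 in
lemma y_eq : ∀ (j : Fin (lam 0)) (kf : Fin (N + 1)),
    (P j kf).2 = (P j kf).1 + N - (kf : ℕ) := by
  intro j kf
  obtain ⟨k, hk⟩ := kf
  revert hk
  induction k with
  | zero =>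
      intro hk
      have h0 : (⟨0, hk⟩ : Fin (N + 1)) = 0 := rfl
      rw [h0, (hP1 j).1]
      simp only [Fin.val_zero]
      push_cast
      ring
  | succ k ih =>
      intro hk
      have ihk := ih (by omega)
      have hgoal : P j (⟨k + 1, hk⟩ : Fin (N + 1)) = P j ⟨k + 1, by omega⟩ := rfl
      have hmid : P j (⟨k, by omega⟩ : Fin (N + 1)) = P j ⟨k, by omega⟩ := rfl
      rw [hgoal]
      simp only [Fin.val_mk] at ihk ⊢
      rcases (hP1 j).2.2 k (by omega) with h | h <;>
        (rw [h]; simp only; push_cast; push_cast at ihk; omega)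

include hP1 hP2 in
lemma xfun_ne : ∀ j j', j < j' → j' < lam 0 → ∀ k, k ≤ N →
    xfun lam N P j k ≠ xfun lam N P j' k := by
  intro j j' hjj hj' k hk heq
  have hj : j < lam 0 := by omega
  unfold xfun at heq
  rw [dif_pos ⟨hj, hk⟩, dif_pos ⟨hj', hk⟩] at heq
  set kf : Fin (N + 1) := ⟨k, by omega⟩ with hkf
  have heq' : (P ⟨j, hj⟩ kf).1 = (P ⟨j', hj'⟩ kf).1 := heq
  have hy := y_eq hP1 ⟨j, hj⟩ kf
  have hy' := y_eq hP1 ⟨j', hj'⟩ kf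
  have : P ⟨j, hj⟩ kf = P ⟨j', hj'⟩ kf := by
    apply Prod.ext
    · exact heq'
    · rw [hy, hy', heq']
  exact hP2 ⟨j, hj⟩ ⟨j', hj'⟩ (by simp [Fin.ext_iff]; omega) _ _ this

end PathProps

end SSYTPaths

/-- For a partition `λ` with at most `N` rows, the semistandard Young tableaux
of shape `λ` with entries at most `N` are in bijection with families
`(P_1, …, P_{λ_1})` of pairwise vertex-disjoint lattice paths, where `P_j`
(1-indexed `j`) uses unit east and south steps and runs from
`(j − λ'_j, N − λ'_j + j)` to `(j, j)`. -/
theorem ssyt_equiv_nonintersecting_paths (lam : ℕ → ℕ) (hA : Antitone lam)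
    (N : ℕ) (hN : lam N = 0) :
    Nonempty
      ({T : ℕ → ℕ → ℕ //
          (∀ i j, j < lam i → 1 ≤ T i j ∧ T i j ≤ N) ∧
          (∀ i j, j + 1 < lam i → T i j ≤ T i (j + 1)) ∧
          (∀ i j, j < lam (i + 1) → T i j < T (i + 1) j) ∧
          (∀ i j, ¬ j < lam i → T i j = 0)} ≃
        {P : Fin (lam 0) → Fin (N + 1) → ℤ × ℤ //
          (∀ j : Fin (lam 0),
            P j 0 = (((j : ℕ) : ℤ) + 1 - conjP lam N j,
                     (N : ℤ) - conjP lam N j + (j : ℕ) + 1) ∧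
            P j (Fin.last N) = (((j : ℕ) : ℤ) + 1, ((j : ℕ) : ℤ) + 1) ∧
            ∀ k : ℕ, (hk : k < N) →
              P j ⟨k + 1, by omega⟩ = ((P j ⟨k, by omega⟩).1 + 1, (P j ⟨k, by omega⟩).2) ∨
              P j ⟨k + 1, by omega⟩ = ((P j ⟨k, by omega⟩).1, (P j ⟨k, by omega⟩).2 - 1)) ∧
          (∀ j j' : Fin (lam 0), j ≠ j' →
            ∀ k k' : Fin (N + 1), P j k ≠ P j' k')}) := by
  classical
  open SSYTPaths in
  refine ⟨?_⟩
  -- forward map well-definedness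
  have fwd : ∀ (T : ℕ → ℕ → ℕ),
      (∀ i j, j < lam i → 1 ≤ T i j ∧ T i j ≤ N) →
      (∀ i j, j + 1 < lam i → T i j ≤ T i (j + 1)) →
      (∀ i j, j < lam (i + 1) → T i j < T (i + 1) j) →
      (∀ j : Fin (lam 0),
        pathOf lam N T (j : ℕ) ((0 : Fin (N+1)) : ℕ) =
          (((j : ℕ) : ℤ) + 1 - conjP lam N j,
           (N : ℤ) - conjP lam N j + (j : ℕ) + 1) ∧
        pathOf lam N T (j : ℕ) ((Fin.last N : Fin (N+1)) : ℕ) =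
          (((j : ℕ) : ℤ) + 1, ((j : ℕ) : ℤ) + 1) ∧
        ∀ k : ℕ, k < N →
          pathOf lam N T (j : ℕ) (k + 1) =
            ((pathOf lam N T (j : ℕ) k).1 + 1, (pathOf lam N T (j : ℕ) k).2) ∨
          pathOf lam N T (j : ℕ) (k + 1) =
            ((pathOf lam N T (j : ℕ) k).1, (pathOf lam N T (j : ℕ) k).2 - 1)) ∧
      (∀ j j' : Fin (lam 0), j ≠ j' → ∀ k k' : Fin (N + 1),
        pathOf lam N T (j : ℕ) (k : ℕ) ≠ pathOf lam N T (j' : ℕ) (k' : ℕ)) := by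
    intro T h1 h2 h3
    constructor
    · intro j
      refine ⟨?_, ?_, ?_⟩
      · simp only [Fin.val_zero]
        unfold pathOf
        rw [colD_zero hA hN h1]
        simp only [Prod.mk.injEq]
        constructor
        · trivial
        · push_cast; ring
      · simp only [Fin.val_last]
        unfold pathOf
        rw [colD_last hA hN h1]
        simp only [Prod.mk.injEq]
        constructor
        · push_cast; ring
        · push_cast; ring
      · intro k hk
        have ha := colD_anti_k (lam := lam) (N := N) (T := T) (j : ℕ) k
        have hs := colD_step hA hN h3 (j : ℕ) k hk
        unfold pathOf
        simp only [Prod.mk.injEq]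
        push_cast
        omega
    · intro j j' hjj k k' heq
      unfold pathOf at heq
      simp only [Prod.mk.injEq] at heq
      obtain ⟨hx, hy⟩ := heq
      have hkk : (k : ℕ) = (k' : ℕ) := by omega
      rw [hkk] at hx hy
      have hvne : (j : ℕ) ≠ (j' : ℕ) := fun h => hjj (Fin.ext h)
      rcases Nat.lt_or_ge (j : ℕ) (j' : ℕ) with h | h
      · have hD := colD_anti_j hA hN h2 (j := (j:ℕ)) (j' := (j':ℕ)) (k := (k':ℕ)) (le_of_lt h)
        omega
      · have h' : (j' : ℕ) < (j : ℕ) := by omega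
        have hD := colD_anti_j hA hN h2 (j := (j':ℕ)) (j' := (j:ℕ)) (k := (k':ℕ)) (le_of_lt h')
        omega
  -- the x-coordinate function extracted from a path family
  refine
    { toFun := fun Th =>
        ⟨fun j k => pathOf lam N Th.1 (j : ℕ) (k : ℕ), ?pA, ?pB⟩
      invFun := fun Pp =>
        ⟨tabOf lam N (xfun lam N Pp.1), ?t1, ?t2, ?t3, ?t4⟩
      left_inv := ?linv
      right_inv := ?rinv }
  case pA => exact (fwd Th.1 Th.2.1 Th.2.2.1 Th.2.2.2.1).1
  case pB => exact (fwd Th.1 Th.2.1 Th.2.2.1 Th.2.2.2.1).2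
  case t1 =>
    intro i j hij
    exact tab_bounds hA hN (xfun_0 Pp.2.1) (xfun_N Pp.2.1) (xfun_step Pp.2.1) i j hij
  case t2 =>
    intro i j hij
    exact tab_row hA hN (xfun_0 Pp.2.1) (xfun_N Pp.2.1) (xfun_step Pp.2.1)
      (xfun_ne Pp.2.1 Pp.2.2) i j hij
  case t3 =>
    intro i j hij
    exact tab_col hA hN (xfun_0 Pp.2.1) (xfun_N Pp.2.1) (xfun_step Pp.2.1) i j hij
  case t4 =>
    intro i j hij
    simp [tabOf, hij]
  case linv =>
    intro Th
    obtain ⟨T, h1, h2, h3, h4⟩ := Th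
    apply Subtype.ext
    funext i j
    show tabOf lam N (xfun lam N (fun jf kf => pathOf lam N T (jf : ℕ) (kf : ℕ))) i j = T i j
    by_cases hij : j < lam i
    · have hj0 : j < lam 0 := lt_of_lt_of_le hij (hA (Nat.zero_le i))
      rw [tabOf_congr (N := N) (x' := fun j k => (j : ℤ) + 1 - colD lam N T j k) i j ?_]
      · exact rt1 hA hN h1 h3 i j hij
      · intro k hk
        unfold xfun
        rw [dif_pos ⟨hj0, hk⟩]
        rfl
    · rw [show tabOf lam N (xfun lam N (fun jf kf => pathOf lam N T (jf : ℕ) (kf : ℕ))) i j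
          = 0 from if_neg hij, h4 i j hij]
  case rinv =>
    intro Pp
    obtain ⟨P, hP1, hP2⟩ := Pp
    apply Subtype.ext
    funext j k
    show pathOf lam N (tabOf lam N (xfun lam N P)) (j : ℕ) (k : ℕ) = P j k
    have hkN : (k : ℕ) ≤ N := by omega
    have hxv : xfun lam N P (j : ℕ) (k : ℕ) = (P j k).1 := by
      unfold xfun
      rw [dif_pos ⟨j.isLt, hkN⟩]
    have hx := rt2 hA hN (xfun_0 hP1) (xfun_N hP1) (xfun_step hP1)
      (j : ℕ) (k : ℕ) j.isLt hkN
    have hy := y_eq hP1 j k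
    unfold pathOf
    have hxx : ((j : ℕ) : ℤ) + 1 - colD lam N (tabOf lam N (xfun lam N P)) (j : ℕ) (k : ℕ)
        = (P j k).1 := by rw [hx, hxv]
    rw [hxx, ← hy]
end
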